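/- For odd n ≥ 7, no permutation in S_n conjugates the n-cycle x = (1 2 … n) to x⁻¹ and simultaneously conjugates the 3-cycle y = (1 2 4) to y⁻¹. -/

import Mathlib

/-!
A permutation inverting the rotation `i ↦ i + 1` of `ℤ/n` is a reflection `i ↦ c - i`.
If that reflection also inverts `y = (0 1 3)`, then `y (c - 1) = c` and `y c = c - 3`.
The first equation makes `c - 1` a point moved by `y`, i.e. one of `0, 1, 3`, and in each
case one of `1, 4, 5` would vanish in `ℤ/n`, which is impossible once `n ≥ 6`.
-/

open Equiv Fin.CommRing

theorem Equiv.Perm.apply_apply_apply_of_conj_eq_inv {α : Type*} {g σ : Perm α}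
    (h : g * σ * g⁻¹ = σ⁻¹) (i : α) : σ (g (σ i)) = g i := by
  rw [← Perm.eq_inv_iff_eq, ← h]
  simp

theorem List.formPerm_finRange (n : ℕ) : (List.finRange n).formPerm = finRotate n := by
  ext i
  have := i.neZero
  have hi := List.formPerm_apply_getElem (List.finRange n) (List.nodup_finRange n) i.val
    (by simp)
  simp only [List.getElem_finRange, Fin.cast_mk, Fin.eta, List.length_finRange] at hi
  rw [hi, finRotate_apply, Fin.val_add]
  simp

theorem List.formPerm_three_apply {α : Type*} [DecidableEq α] {a b c : α} (hab : a ≠ b)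
    (hac : a ≠ c) (hbc : b ≠ c) :
    [a, b, c].formPerm a = b ∧ [a, b, c].formPerm b = c ∧ [a, b, c].formPerm c = a := by
  simp [swap_apply_def, hab, hac, hac.symm, hbc.symm]

theorem Fin.natCast_ne_zero_of_lt {n k : ℕ} [NeZero n] (hk0 : 0 < k) (hkn : k < n) :
    (k : Fin n) ≠ 0 := by
  rw [Ne, Fin.natCast_eq_zero]
  exact Nat.not_dvd_of_pos_of_lt hk0 hkn

theorem Fin.apply_eq_sub_of_conj_finRotate_eq_inv {n : ℕ} [NeZero n] {g : Perm (Fin n)}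
    (h : g * finRotate n * g⁻¹ = (finRotate n)⁻¹) (i : Fin n) : g i = g 0 - i := by
  suffices ∀ k : ℕ, g k = g 0 - k by simpa using this i
  intro k
  induction k with
  | zero => simp
  | succ k ih =>
    have hstep := Perm.apply_apply_apply_of_conj_eq_inv h k
    rw [finRotate_apply, finRotate_apply, ih] at hstep
    push_cast
    rw [eq_sub_of_add_eq hstep]
    ring

theorem Fin.conj_formPerm_zero_one_three_ne_inv_of_eq_sub {n : ℕ} [NeZero n] (hn : 6 ≤ n)
    {g : Perm (Fin n)} (c : Fin n) (hg : ∀ i, g i = c - i) :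
    g * [0, 1, 3].formPerm * g⁻¹ ≠ [(0 : Fin n), 1, 3].formPerm⁻¹ := by
  have hk (k : ℕ) (hk0 : 0 < k := by norm_num) (hk6 : k < 6 := by norm_num) : (k : Fin n) ≠ 0 :=
    natCast_ne_zero_of_lt hk0 (by omega)
  have h1 : (1 : Fin n) ≠ 0 := by exact_mod_cast hk 1
  have h2 : (2 : Fin n) ≠ 0 := by exact_mod_cast hk 2
  have h3 : (3 : Fin n) ≠ 0 := by exact_mod_cast hk 3
  have h4 : (4 : Fin n) ≠ 0 := by exact_mod_cast hk 4
  have h5 : (5 : Fin n) ≠ 0 := by exact_mod_cast hk 5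
  set y := [(0 : Fin n), 1, 3].formPerm
  obtain ⟨y0, y1, y3⟩ : y 0 = 1 ∧ y 1 = 3 ∧ y 3 = 0 :=
    List.formPerm_three_apply h1.symm h3.symm fun h13 => h2 (by linear_combination -h13)
  intro h
  have hc1 : y (c - 1) = c := by
    simpa [y0, hg] using Perm.apply_apply_apply_of_conj_eq_inv h 0
  have hc : y c = c - 3 := by
    simpa [y3, hg] using Perm.apply_apply_apply_of_conj_eq_inv h 3
  have hmem : c - 1 ∈ [0, 1, 3] :=
    List.mem_of_formPerm_apply_ne fun hfix : y (c - 1) = c - 1 =>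
      h1 (by linear_combination hfix - hc1)
  simp only [List.mem_cons, List.not_mem_nil, or_false] at hmem
  rcases hmem with hc0 | hc0 | hc0 <;> rw [hc0] at hc1
  · rw [y0] at hc1
    rw [← hc1, y1] at hc
    exact h5 (by linear_combination hc)
  · rw [y1] at hc1
    exact h1 (by linear_combination hc0 + hc1)
  · rw [y3] at hc1
    exact h4 (by linear_combination -hc0 - hc1)

/-- For odd `n ≥ 7`, no permutation in `S_n` simultaneously conjugates the `n`-cycle
`x = (1 2 … n)` to `x⁻¹` and the 3-cycle `y = (1 2 4)` to `y⁻¹`.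
(Points are labelled `0,…,n−1`.) -/
theorem stmt_11 (n : ℕ) (hn : 7 ≤ n) :
    ¬ ∃ g : Equiv.Perm (Fin n),
        g * (List.finRange n).formPerm * g⁻¹ = ((List.finRange n).formPerm)⁻¹ ∧
        g * ([(⟨0, by omega⟩ : Fin n), ⟨1, by omega⟩, ⟨3, by omega⟩]).formPerm * g⁻¹ =
          (([(⟨0, by omega⟩ : Fin n), ⟨1, by omega⟩, ⟨3, by omega⟩]).formPerm)⁻¹ := by
  have : NeZero n := ⟨by omega⟩
  rintro ⟨g, hx, hy⟩
  rw [List.formPerm_finRange] at hx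
  have hpoints : [(⟨0, by omega⟩ : Fin n), ⟨1, by omega⟩, ⟨3, by omega⟩] = [0, 1, 3] := by
    simp [Fin.ext_iff, Nat.mod_eq_of_lt (show 1 < n by omega),
      Nat.mod_eq_of_lt (show 3 < n by omega)]
  rw [hpoints] at hy
  exact Fin.conj_formPerm_zero_one_three_ne_inv_of_eq_sub (by omega) (g 0)
    (Fin.apply_eq_sub_of_conj_finRotate_eq_inv hx) hy
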